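/- Let φ : X → H be weakly measurable and μ-total. Then C_φ : H → V_φ(X,μ)*, defined by (C_φ f)([ξ]_φ) := ∫_X ξ(x)⟨φ(x),f⟩ dμ(x), is an isometric isomorphism of H onto the dual space V_φ(X,μ)* (with the dual norm ‖·‖_{φ*}). -/

import Mathlib

/-! The pairing `∫ ξ(x) ⟨φ(x), f⟩ dμ(x)` equals `⟨T_φ ξ, f⟩`, and `‖[ξ]_φ‖_φ = ‖T_φ ξ‖`, so
`V_φ(X,μ)` is isometric to the range of `T_φ`; `μ`-totality says exactly that this range is dense
in `H`. A bounded functional on `V_φ(X,μ)` is therefore a bounded functional on a dense subspace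
of `H`: it extends continuously to `H` and is an inner product by the Riesz theorem, uniquely by
density. Density also makes the supremum of `|⟨T_φ ξ, f⟩|` over `‖T_φ ξ‖ ≤ 1` equal to `‖f‖`. -/

open MeasureTheory Filter Topology
open scoped Classical ENNReal NNReal

noncomputable section

variable {H : Type*} [NormedAddCommGroup H] [InnerProductSpace ℂ H] [CompleteSpace H]
  [TopologicalSpace.SeparableSpace H]
variable {X : Type*} [TopologicalSpace X] [LocallyCompactSpace X] [MeasurableSpace X]
  [BorelSpace X]

/-- Notation for the Mathlib inner product (conjugate-linear in the first slot);
the paper's inner product `⟨f, g⟩` (linear in the first slot) is `⟪g, f⟫`. -/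
local notation "⟪" x ", " y "⟫" => @inner ℂ _ _ x y

/-- `φ : X → H` is weakly measurable: `x ↦ ⟨f, φ x⟩` is measurable for every `f ∈ H`. -/
def WeaklyMeasurable (φ : X → H) : Prop :=
  ∀ f : H, Measurable fun x => ⟪φ x, f⟫

/-- `ξ ∈ 𝒱_φ(X,μ)`: `ξ` is measurable, the integral `∫ ξ(x) ⟨φ(x), g⟩ dμ(x)` exists for all
`g ∈ H`, and it defines a bounded conjugate-linear functional of `g`. -/
def MemV (μ : Measure X) (φ : X → H) (ξ : X → ℂ) : Prop :=
  Measurable ξ ∧ (∀ g : H, Integrable (fun x => ξ x * ⟪g, φ x⟫) μ) ∧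
    ∃ c : ℝ, ∀ g : H, ‖∫ x, ξ x * ⟪g, φ x⟫ ∂μ‖ ≤ c * ‖g‖

/-- The map `T_φ : 𝒱_φ(X,μ) → H`, determined weakly by
`⟨T_φ ξ, g⟩ = ∫ ξ(x) ⟨φ(x), g⟩ dμ(x)` for all `g ∈ H` (junk value `0` off `𝒱_φ`). -/
def Tmap (μ : Measure X) (φ : X → H) (ξ : X → ℂ) : H :=
  if h : MemV μ φ ξ then
    have key : ∀ g : H, Integrable (fun x => (starRingEnd ℂ) (ξ x) * ⟪φ x, g⟫) μ := by
      intro g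
      have h2 : Integrable (fun x => (RCLike.conjLIE : ℂ ≃ₗᵢ[ℝ] ℂ) (ξ x * ⟪g, φ x⟫)) μ :=
        ((RCLike.conjLIE : ℂ ≃ₗᵢ[ℝ] ℂ).integrable_comp_iff).2 (h.2.1 g)
      simpa [RCLike.conjLIE_apply, map_mul] using h2
    (InnerProductSpace.toDual ℂ H).symm
      (LinearMap.mkContinuousOfExistsBound
        { toFun := fun g => ∫ x, (starRingEnd ℂ) (ξ x) * ⟪φ x, g⟫ ∂μ
          map_add' := fun g g' => by
            simp only [inner_add_right, mul_add]
            exact integral_add (key g) (key g')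
          map_smul' := fun c g => by
            simp only [inner_smul_right, RingHom.id_apply]
            calc ∫ x, (starRingEnd ℂ) (ξ x) * (c * ⟪φ x, g⟫) ∂μ
                = ∫ x, c * ((starRingEnd ℂ) (ξ x) * ⟪φ x, g⟫) ∂μ := by
                  simp only [mul_left_comm]
              _ = c * ∫ x, (starRingEnd ℂ) (ξ x) * ⟪φ x, g⟫ ∂μ := integral_const_mul _ _ }
        (by
          obtain ⟨c, hc⟩ := h.2.2
          refine ⟨c, fun g => ?_⟩
          have he : ∫ x, (starRingEnd ℂ) (ξ x) * ⟪φ x, g⟫ ∂μ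
              = (starRingEnd ℂ) (∫ x, ξ x * ⟪g, φ x⟫ ∂μ) := by
            rw [← integral_conj]
            congr 1; funext x
            simp [map_mul]
          simp only [LinearMap.coe_mk, AddHom.coe_mk]
          rw [he, RCLike.norm_conj]
          exact hc g))
  else 0

/-- The norm `‖[ξ]_φ‖_φ = sup_{‖g‖ ≤ 1} |∫ ξ(x) ⟨φ(x), g⟩ dμ(x)|` (computed on a
representative; it only depends on the class `[ξ]_φ = ξ + Ker T_φ`). -/
def Vnorm (μ : Measure X) (φ : X → H) (ξ : X → ℂ) : ℝ :=
  ⨆ g : {g : H // ‖g‖ ≤ 1}, ‖∫ x, ξ x * ⟪(g : H), φ x⟫ ∂μ‖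

/-- The range of `T̂_φ : V_φ(X,μ) → H` (equivalently, of `T_φ` on `𝒱_φ(X,μ)`). -/
def Tran (μ : Measure X) (φ : X → H) : Set H := Tmap μ φ '' {ξ | MemV μ φ ξ}

/-- The analysis coefficient map: `(C_ψ f)(x) = ⟨f, ψ(x)⟩`. -/
def Cpsi (ψ : X → H) (f : H) : X → ℂ := fun x => ⟪ψ x, f⟫

/-- `φ` is `μ`-total: `Ker C_φ = {0}`, i.e. if `∫ ξ(x) ⟨φ(x), f⟩ dμ(x) = 0` for every
`ξ ∈ 𝒱_φ(X,μ)`, then `f = 0`. -/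
def MuTotal (μ : Measure X) (φ : X → H) : Prop :=
  ∀ f : H, (∀ ξ, MemV μ φ ξ → ∫ x, ξ x * ⟪f, φ x⟫ ∂μ = 0) → f = 0

/-- `S : H ≃L[ℂ] H` represents the sesquilinear form `Ω_{ψ,φ}`:
`⟨S f, g⟩ = ∫ ⟨f, ψ(x)⟩ ⟨φ(x), g⟩ dμ(x)` for all `f, g ∈ H`. -/
def IsAnalysisOp (μ : Measure X) (ψ φ : X → H) (S : H ≃L[ℂ] H) : Prop :=
  ∀ f g : H, ⟪g, S f⟫ = ∫ x, ⟪ψ x, f⟫ * ⟪g, φ x⟫ ∂μ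

/-- `(ψ, φ)` is a reproducing pair: both weakly measurable, the form
`Ω_{ψ,φ}(f,g) = ∫ ⟨f,ψ(x)⟩⟨φ(x),g⟩ dμ(x)` is well defined (integrable) and bounded, and the
associated bounded operator `S_{ψ,φ}` has a bounded everywhere-defined inverse. -/
def IsReproducingPair (μ : Measure X) (ψ φ : X → H) : Prop :=
  WeaklyMeasurable ψ ∧ WeaklyMeasurable φ ∧
    (∀ f g : H, Integrable (fun x => ⟪ψ x, f⟫ * ⟪g, φ x⟫) μ) ∧
    ∃ S : H ≃L[ℂ] H, IsAnalysisOp μ ψ φ S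

/-- Completeness of `V_φ(X,μ)` in the norm `‖·‖_φ`, phrased via representatives:
every `‖·‖_φ`-Cauchy sequence of elements of `𝒱_φ(X,μ)` converges in `‖·‖_φ`
to an element of `𝒱_φ(X,μ)`. -/
def VComplete (μ : Measure X) (φ : X → H) : Prop :=
  ∀ ξ : ℕ → X → ℂ, (∀ n, MemV μ φ (ξ n)) →
    (∀ ε : ℝ, 0 < ε → ∃ N, ∀ m ≥ N, ∀ n ≥ N, Vnorm μ φ (ξ m - ξ n) < ε) →
    ∃ η, MemV μ φ η ∧ Tendsto (fun n => Vnorm μ φ (ξ n - η)) atTop (𝓝 0)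

/-- `F` is (induced by) a bounded linear functional on `V_φ(X,μ)`: it is linear on `𝒱_φ(X,μ)`,
constant on the classes of `V_φ(X,μ) = 𝒱_φ(X,μ)/Ker T_φ`, and bounded for `‖·‖_φ`. -/
def IsBddLinearFunctional (μ : Measure X) (φ : X → H) (F : (X → ℂ) → ℂ) : Prop :=
  (∀ ξ η, MemV μ φ ξ → MemV μ φ η → F (ξ + η) = F ξ + F η) ∧
  (∀ (c : ℂ) ξ, MemV μ φ ξ → F (c • ξ) = c * F ξ) ∧
  (∀ ξ η, MemV μ φ ξ → MemV μ φ η → Tmap μ φ (ξ - η) = 0 → F ξ = F η) ∧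
  ∃ c : ℝ, ∀ ξ, MemV μ φ ξ → ‖F ξ‖ ≤ c * Vnorm μ φ ξ

/-- The dual norm `‖F‖_{φ*} = sup_{‖[ξ]_φ‖_φ ≤ 1} |F([ξ]_φ)|`. -/
def DualNorm (μ : Measure X) (φ : X → H) (F : (X → ℂ) → ℂ) : ℝ :=
  ⨆ ξ : {ξ : X → ℂ // MemV μ φ ξ ∧ Vnorm μ φ ξ ≤ 1}, ‖F ξ.1‖

/-- `V_φ(X,μ)` and `V_ψ(X,μ)` are conjugate dual to each other with respect to the pairing
`⟨⟨ξ, η⟩⟩ = ∫ ξ(x) conj(η(x)) dμ(x)`: the pairing is well defined, each class `[η]_ψ` gives a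
bounded linear functional on `V_φ(X,μ)`, and `[η]_ψ ↦ ⟨⟨·, η⟩⟩` is a bijection from `V_ψ(X,μ)`
onto the dual of `V_φ(X,μ)`. -/
def ConjDual (μ : Measure X) (φ ψ : X → H) : Prop :=
  (∀ ξ η, MemV μ φ ξ → MemV μ ψ η →
      Integrable (fun x => ξ x * (starRingEnd ℂ) (η x)) μ) ∧
  (∀ η, MemV μ ψ η →
      IsBddLinearFunctional μ φ (fun ξ => ∫ x, ξ x * (starRingEnd ℂ) (η x) ∂μ)) ∧
  (∀ η η', MemV μ ψ η → MemV μ ψ η' →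
      (∀ ξ, MemV μ φ ξ →
        ∫ x, ξ x * (starRingEnd ℂ) (η x) ∂μ = ∫ x, ξ x * (starRingEnd ℂ) (η' x) ∂μ) →
      Tmap μ ψ (η - η') = 0) ∧
  (∀ F, IsBddLinearFunctional μ φ F →
      ∃ η, MemV μ ψ η ∧ ∀ ξ, MemV μ φ ξ → F ξ = ∫ x, ξ x * (starRingEnd ℂ) (η x) ∂μ)

theorem iSup_norm_inner_le_one_eq_norm {𝕜 E : Type*} [RCLike 𝕜] [NormedAddCommGroup E]
    [InnerProductSpace 𝕜 E] (v : E) :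
    ⨆ g : {g : E // ‖g‖ ≤ 1}, ‖inner 𝕜 (g : E) v‖ = ‖v‖ := by
  have hball : Metric.closedBall (0 : E) 1 = {g | ‖g‖ ≤ 1} := by ext; simp
  rw [← innerSL_apply_norm 𝕜 v, ← (innerSL 𝕜 v).sSup_unitClosedBall_eq_norm, hball, sSup_image']
  simp only [innerSL_apply_apply, norm_inner_symm v]
  rfl

theorem ContinuousLinearMap.opNorm_le_of_denseRange {𝕜 V E F : Type*} [RCLike 𝕜]
    [AddCommGroup V] [Module 𝕜 V] [NormedAddCommGroup E] [NormedSpace 𝕜 E]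
    [SeminormedAddCommGroup F] [NormedSpace 𝕜 F] (ℓ : E →L[𝕜] F) {e : V →ₗ[𝕜] E}
    (he : DenseRange e) {S : ℝ} (hS : 0 ≤ S) (h : ∀ v, ‖e v‖ ≤ 1 → ‖ℓ (e v)‖ ≤ S) :
    ‖ℓ‖ ≤ S := by
  have hbound : ∀ v, ‖ℓ (e v)‖ ≤ S * ‖e v‖ := by
    intro v
    rcases eq_or_ne (e v) 0 with hv | hv
    · simp [hv]
    · have hpos : 0 < ‖e v‖ := norm_pos_iff.2 hv
      have hunit := h ((‖e v‖⁻¹ : 𝕜) • v) (by simp [norm_smul, hpos.ne'])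
      rw [map_smul, map_smul, norm_smul, norm_inv, RCLike.norm_ofReal, abs_norm,
        inv_mul_le_iff₀ hpos] at hunit
      linarith
  exact ℓ.opNorm_le_bound hS fun x =>
    he.induction_on (p := fun x => ‖ℓ x‖ ≤ S * ‖x‖) x
      (isClosed_le (by fun_prop) (by fun_prop)) hbound

theorem exists_inner_eq_of_denseRange {𝕜 V E : Type*} [RCLike 𝕜] [AddCommGroup V] [Module 𝕜 V]
    [NormedAddCommGroup E] [InnerProductSpace 𝕜 E] [CompleteSpace E] {e : V →ₗ[𝕜] E}
    (he : DenseRange e) (F : V →ₗ[𝕜] 𝕜) (hF : ∃ C, ∀ v, ‖F v‖ ≤ C * ‖e v‖) :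
    ∃ f : E, ∀ v, F v = inner 𝕜 f (e v) :=
  ⟨(InnerProductSpace.toDual 𝕜 E).symm (F.extendOfNorm e), fun v => by
    rw [InnerProductSpace.toDual_symm_apply, LinearMap.extendOfNorm_eq he hF]⟩

section MemV

omit [CompleteSpace H] [TopologicalSpace.SeparableSpace H] [TopologicalSpace X]
  [LocallyCompactSpace X] [BorelSpace X]

variable {μ : Measure X} {φ : X → H} {ξ η : X → ℂ}

theorem memV_zero : MemV μ φ 0 :=
  ⟨measurable_const, fun _ => by simp, 0, fun _ => by simp⟩

theorem integral_add_mul_inner (hξ : MemV μ φ ξ) (hη : MemV μ φ η) (g : H) :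
    ∫ x, (ξ + η) x * ⟪g, φ x⟫ ∂μ = ∫ x, ξ x * ⟪g, φ x⟫ ∂μ + ∫ x, η x * ⟪g, φ x⟫ ∂μ := by
  simp only [Pi.add_apply, add_mul]
  exact integral_add (hξ.2.1 g) (hη.2.1 g)

theorem integral_smul_mul_inner (c : ℂ) (ξ : X → ℂ) (g : H) :
    ∫ x, (c • ξ) x * ⟪g, φ x⟫ ∂μ = c * ∫ x, ξ x * ⟪g, φ x⟫ ∂μ := by
  simp only [Pi.smul_apply, smul_eq_mul, mul_assoc]
  exact integral_const_mul c _

theorem MemV.add (hξ : MemV μ φ ξ) (hη : MemV μ φ η) : MemV μ φ (ξ + η) := by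
  obtain ⟨c, hc⟩ := hξ.2.2
  obtain ⟨d, hd⟩ := hη.2.2
  refine ⟨hξ.1.add hη.1, fun g => ?_, c + d, fun g => ?_⟩
  · simpa only [Pi.add_def, add_mul] using (hξ.2.1 g).add (hη.2.1 g)
  · rw [integral_add_mul_inner hξ hη, add_mul]
    exact (norm_add_le _ _).trans (add_le_add (hc g) (hd g))

theorem MemV.const_smul (hξ : MemV μ φ ξ) (c : ℂ) : MemV μ φ (c • ξ) := by
  obtain ⟨b, hb⟩ := hξ.2.2
  refine ⟨hξ.1.const_smul c, fun g => ?_, ‖c‖ * b, fun g => ?_⟩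
  · simpa only [Pi.smul_apply, smul_eq_mul, mul_assoc] using (hξ.2.1 g).const_mul c
  · rw [integral_smul_mul_inner, norm_mul, mul_assoc]
    exact mul_le_mul_of_nonneg_left (hb g) (norm_nonneg c)

variable (μ φ) in
def vSubmodule : Submodule ℂ (X → ℂ) where
  carrier := {ξ | MemV μ φ ξ}
  add_mem' := MemV.add
  zero_mem' := memV_zero
  smul_mem' c _ hξ := hξ.const_smul c

end MemV

section Tmap

omit [TopologicalSpace.SeparableSpace H] [TopologicalSpace X] [LocallyCompactSpace X]
  [BorelSpace X]

variable {μ : Measure X} {φ : X → H} {ξ η : X → ℂ}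

theorem inner_Tmap (hξ : MemV μ φ ξ) (g : H) :
    ⟪g, Tmap μ φ ξ⟫ = ∫ x, ξ x * ⟪g, φ x⟫ ∂μ := by
  rw [← inner_conj_symm, Tmap, dif_pos hξ, InnerProductSpace.toDual_symm_apply,
    LinearMap.mkContinuousOfExistsBound_apply, LinearMap.coe_mk, AddHom.coe_mk, ← integral_conj]
  simp [map_mul]

theorem Tmap_add (hξ : MemV μ φ ξ) (hη : MemV μ φ η) :
    Tmap μ φ (ξ + η) = Tmap μ φ ξ + Tmap μ φ η :=
  ext_inner_left ℂ fun g => by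
    rw [inner_add_right, inner_Tmap (hξ.add hη), inner_Tmap hξ, inner_Tmap hη,
      integral_add_mul_inner hξ hη]

theorem Tmap_smul (hξ : MemV μ φ ξ) (c : ℂ) : Tmap μ φ (c • ξ) = c • Tmap μ φ ξ :=
  ext_inner_left ℂ fun g => by
    rw [inner_smul_right, inner_Tmap (hξ.const_smul c), inner_Tmap hξ, integral_smul_mul_inner]

variable (μ φ) in
def tmapLinearMap : vSubmodule μ φ →ₗ[ℂ] H where
  toFun ξ := Tmap μ φ ξ
  map_add' ξ η := Tmap_add ξ.2 η.2
  map_smul' c ξ := Tmap_smul ξ.2 c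

theorem Tmap_sub (hξ : MemV μ φ ξ) (hη : MemV μ φ η) :
    Tmap μ φ (ξ - η) = Tmap μ φ ξ - Tmap μ φ η :=
  (tmapLinearMap μ φ).map_sub ⟨ξ, hξ⟩ ⟨η, hη⟩

theorem Vnorm_eq_norm_Tmap (hξ : MemV μ φ ξ) : Vnorm μ φ ξ = ‖Tmap μ φ ξ‖ := by
  rw [Vnorm, ← iSup_norm_inner_le_one_eq_norm (𝕜 := ℂ)]
  simp_rw [inner_Tmap hξ]

theorem isBddLinearFunctional_integral_mul_inner (f : H) :
    IsBddLinearFunctional μ φ (fun ξ => ∫ x, ξ x * ⟪f, φ x⟫ ∂μ) := by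
  refine ⟨fun ξ η hξ hη => integral_add_mul_inner hξ hη f,
    fun c ξ _ => integral_smul_mul_inner c ξ f, fun ξ η hξ hη hT => ?_, ‖f‖, fun ξ hξ => ?_⟩
  · dsimp only
    rw [← inner_Tmap hξ, ← inner_Tmap hη, sub_eq_zero.1 ((Tmap_sub hξ hη).symm.trans hT)]
  · dsimp only
    rw [← inner_Tmap hξ, Vnorm_eq_norm_Tmap hξ]
    exact norm_inner_le_norm f _

theorem MuTotal.denseRange_tmapLinearMap (htot : MuTotal μ φ) :
    DenseRange (tmapLinearMap μ φ) := by
  rw [DenseRange, ← LinearMap.coe_range, Submodule.dense_iff_topologicalClosure_eq_top,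
    Submodule.topologicalClosure_eq_top_iff, Submodule.eq_bot_iff]
  intro v hv
  refine htot v fun ξ hξ => ?_
  rw [← inner_Tmap hξ, inner_eq_zero_symm]
  exact Submodule.inner_right_of_mem_orthogonal
    (LinearMap.mem_range_self (tmapLinearMap μ φ) ⟨ξ, hξ⟩) hv

theorem MuTotal.dualNorm_integral_mul_inner (htot : MuTotal μ φ) (f : H) :
    DualNorm μ φ (fun ξ => ∫ x, ξ x * ⟪f, φ x⟫ ∂μ) = ‖f‖ := by
  have hle : ∀ ξ : {ξ : X → ℂ // MemV μ φ ξ ∧ Vnorm μ φ ξ ≤ 1},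
      ‖∫ x, ξ.1 x * ⟪f, φ x⟫ ∂μ‖ ≤ ‖f‖ := by
    rintro ⟨ξ, hξ, hξ1⟩
    rw [← inner_Tmap hξ, ← mul_one ‖f‖]
    exact (norm_inner_le_norm f _).trans
      (mul_le_mul_of_nonneg_left (Vnorm_eq_norm_Tmap hξ ▸ hξ1) (norm_nonneg f))
  refine le_antisymm (Real.iSup_le hle (norm_nonneg f)) ?_
  rw [← innerSL_apply_norm ℂ f]
  refine (innerSL ℂ f).opNorm_le_of_denseRange htot.denseRange_tmapLinearMap
    (Real.iSup_nonneg fun ξ => norm_nonneg (∫ x, ξ.1 x * ⟪f, φ x⟫ ∂μ)) fun ξ hξ1 => ?_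
  have hξ1' : Vnorm μ φ ξ ≤ 1 := (Vnorm_eq_norm_Tmap ξ.2).trans_le hξ1
  rw [innerSL_apply_apply]
  exact (congrArg norm (inner_Tmap ξ.2 f)).trans_le
    (le_ciSup ⟨‖f‖, Set.forall_mem_range.2 hle⟩ ⟨ξ, ξ.2, hξ1'⟩)

theorem MuTotal.exists_integral_mul_inner_eq (htot : MuTotal μ φ) {F : (X → ℂ) → ℂ}
    (hF : IsBddLinearFunctional μ φ F) :
    ∃ f : H, ∀ ξ, MemV μ φ ξ → F ξ = ∫ x, ξ x * ⟪f, φ x⟫ ∂μ := by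
  obtain ⟨hadd, hsmul, -, c, hc⟩ := hF
  let Fₗ : vSubmodule μ φ →ₗ[ℂ] ℂ :=
    { toFun ξ := F ξ
      map_add' ξ η := hadd ξ η ξ.2 η.2
      map_smul' c ξ := hsmul c ξ ξ.2 }
  obtain ⟨f, hf⟩ := exists_inner_eq_of_denseRange htot.denseRange_tmapLinearMap Fₗ
    ⟨c, fun ξ => Vnorm_eq_norm_Tmap ξ.2 ▸ hc ξ ξ.2⟩
  exact ⟨f, fun ξ hξ => (hf ⟨ξ, hξ⟩).trans (inner_Tmap hξ f)⟩

theorem MuTotal.eq_of_integral_mul_inner_eq (htot : MuTotal μ φ) {f f' : H}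
    (h : ∀ ξ, MemV μ φ ξ → ∫ x, ξ x * ⟪f, φ x⟫ ∂μ = ∫ x, ξ x * ⟪f', φ x⟫ ∂μ) : f = f' :=
  sub_eq_zero.1 <| htot _ fun ξ hξ => by
    rw [← inner_Tmap hξ, inner_sub_left, inner_Tmap hξ, inner_Tmap hξ, h ξ hξ, sub_self]

end Tmap

theorem statement6_general (μ : Measure X) (φ : X → H) (htot : MuTotal μ φ) :
    (∀ f : H, IsBddLinearFunctional μ φ (fun ξ => ∫ x, ξ x * ⟪f, φ x⟫ ∂μ)) ∧
    (∀ f : H, DualNorm μ φ (fun ξ => ∫ x, ξ x * ⟪f, φ x⟫ ∂μ) = ‖f‖) ∧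
    (∀ F : (X → ℂ) → ℂ, IsBddLinearFunctional μ φ F →
      ∃! f : H, ∀ ξ, MemV μ φ ξ → F ξ = ∫ x, ξ x * ⟪f, φ x⟫ ∂μ) := by
  refine ⟨isBddLinearFunctional_integral_mul_inner, htot.dualNorm_integral_mul_inner,
    fun F hF => ?_⟩
  obtain ⟨f, hf⟩ := htot.exists_integral_mul_inner_eq hF
  exact ⟨f, hf, fun f' hf' => htot.eq_of_integral_mul_inner_eq fun ξ hξ =>
    (hf' ξ hξ).symm.trans (hf ξ hξ)⟩

/-- Let `φ : X → H` be weakly measurable and `μ`-total. Then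
`C_φ : H → V_φ(X,μ)*`, `(C_φ f)([ξ]_φ) = ∫ ξ(x) ⟨φ(x),f⟩ dμ(x)`, is an isometric isomorphism
of `H` onto the dual space of `V_φ(X,μ)`: each `C_φ f` is a bounded linear functional,
`‖C_φ f‖_{φ*} = ‖f‖`, and every bounded linear functional arises from a unique `f ∈ H`. -/
theorem statement6 (μ : Measure X) [μ.Regular] (φ : X → H) (hφ : WeaklyMeasurable φ)
    (htot : MuTotal μ φ) :
    (∀ f : H, IsBddLinearFunctional μ φ (fun ξ => ∫ x, ξ x * ⟪f, φ x⟫ ∂μ)) ∧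
    (∀ f : H, DualNorm μ φ (fun ξ => ∫ x, ξ x * ⟪f, φ x⟫ ∂μ) = ‖f‖) ∧
    (∀ F : (X → ℂ) → ℂ, IsBddLinearFunctional μ φ F →
      ∃! f : H, ∀ ξ, MemV μ φ ξ → F ξ = ∫ x, ξ x * ⟪f, φ x⟫ ∂μ) :=
  statement6_general μ φ htot
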